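/- Let K be an algebraically closed field of characteristic zero, and let V, W be finite-dimensional K[x,y]-modules with associated Lie algebras L_V = K⟨P,Q⟩ ⋉ V and L_W = K⟨S,T⟩ ⋉ W. If there is a Lie algebra isomorphism φ: L_V → L_W with φ(V) = W (as subsets of L_W), then V and W are weakly isomorphic K[x,y]-modules; in fact, writing φ(P) = α₁S + α₂T + w₁ and φ(Q) = β₁S + β₂T + w₂, the matrix ((α₁,α₂),(β₁,β₂)) is invertible and the restriction of φ to V is a module isomorphism from V to the twist W_θ by this matrix. -/
import Mathlib


/-- The bracket of the semidirect product `L_V = K⟨P,Q⟩ ⋉ V` on `(K × K) × V`. -/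
def lieBk {K V : Type*} [Field K] [AddCommGroup V] [Module K V]
    (P Q : V →ₗ[K] V) (a b : (K × K) × V) : (K × K) × V :=
  (0, (a.1.1 • P + a.1.2 • Q) b.2 - (b.1.1 • P + b.1.2 • Q) a.2)

/-- The abelian ideal `{0} ⊕ V` of `L_V`. -/
def vEmb (K V : Type*) [Field K] [AddCommGroup V] [Module K V] :
    Submodule K ((K × K) × V) :=
  (⊥ : Submodule K (K × K)).prod (⊤ : Submodule K V)

/-- Remark 2: if a Lie algebra isomorphism φ : L_V → L_W maps V onto W,
then the matrix of coefficients of φ(P), φ(Q) is invertible and the restriction of φ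
to V is an isomorphism onto the corresponding twist of W. -/
theorem stmt_12 {K V W : Type*} [Field K] [IsAlgClosed K] [CharZero K]
    [AddCommGroup V] [Module K V] [AddCommGroup W] [Module K W]
    [FiniteDimensional K V] [FiniteDimensional K W]
    (P Q : V →ₗ[K] V) (S T : W →ₗ[K] W)
    (hPQ : ∀ v, P (Q v) = Q (P v)) (hST : ∀ w, S (T w) = T (S w))
    (φ : ((K × K) × V) ≃ₗ[K] ((K × K) × W))
    (hφ : ∀ a b, φ (lieBk P Q a b) = lieBk S T (φ a) (φ b))
    (hVW : (vEmb K V).map (φ : ((K × K) × V) →ₗ[K] (K × K) × W) = vEmb K W) :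
    ∀ (α₁ α₂ β₁ β₂ : K) (w₁ w₂ : W),
      φ (((1 : K), (0 : K)), (0 : V)) = ((α₁, α₂), w₁) →
      φ (((0 : K), (1 : K)), (0 : V)) = ((β₁, β₂), w₂) →
      α₁ * β₂ - α₂ * β₁ ≠ 0 ∧
      ∃ ψ : V ≃ₗ[K] W,
        (∀ v : V, φ ((0 : K × K), v) = ((0 : K × K), ψ v)) ∧
        (∀ v : V, ψ (P v) = (α₁ • S + α₂ • T) (ψ v)) ∧
        (∀ v : V, ψ (Q v) = (β₁ • S + β₂ • T) (ψ v)) := by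
  intro α₁ α₂ β₁ β₂ w₁ w₂ hP hQ
  have hmemW : ∀ z : (K × K) × V, φ z ∈ vEmb K W ↔ z ∈ vEmb K V := by
    intro z
    constructor
    · intro h
      rw [← hVW] at h
      obtain ⟨z', hz', hzz⟩ := h
      have hz : z' = z := φ.injective (by simpa using hzz)
      rwa [← hz]
    · intro h; rw [← hVW]; exact ⟨z, h, rfl⟩
  -- φ maps (0,v) into vEmb K W
  have hA : ∀ v : V, φ ((0 : K × K), v) = ((0 : K × K), (φ ((0 : K × K), v)).2) := by
    intro v
    have h : φ ((0 : K × K), v) ∈ vEmb K W := (hmemW _).2 (by simp [vEmb])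
    have h1 : (φ ((0 : K × K), v)).1 = 0 := by simpa [vEmb] using h
    exact Prod.ext h1 rfl
  have hAs : ∀ w : W, φ.symm ((0 : K × K), w) =
      ((0 : K × K), (φ.symm ((0 : K × K), w)).2) := by
    intro w
    have h : φ (φ.symm ((0 : K × K), w)) ∈ vEmb K W := by
      rw [φ.apply_symm_apply]; simp [vEmb]
    have h2 : φ.symm ((0 : K × K), w) ∈ vEmb K V := (hmemW _).1 h
    have h1 : (φ.symm ((0 : K × K), w)).1 = 0 := by simpa [vEmb] using h2
    exact Prod.ext h1 rfl
  have hcd : ∀ c d : K, φ (((c, d) : K × K), (0 : V)) =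
      ((c * α₁ + d * β₁, c * α₂ + d * β₂), c • w₁ + d • w₂) := by
    intro c d
    have hsplit : (((c, d) : K × K), (0 : V)) =
        c • ((((1 : K), (0 : K)) : K × K), (0 : V)) +
        d • ((((0 : K), (1 : K)) : K × K), (0 : V)) := by
      simp [Prod.ext_iff]
    rw [hsplit, map_add, map_smul, map_smul, hP, hQ]
    simp [Prod.ext_iff, Prod.smul_mk, smul_eq_mul]
  have hinj : ∀ c d : K, c * α₁ + d * β₁ = 0 → c * α₂ + d * β₂ = 0 →
      c = 0 ∧ d = 0 := by
    intro c d h1 h2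
    have hm : (((c, d) : K × K), (0 : V)) ∈ vEmb K V := by
      apply (hmemW _).1
      rw [hcd c d, h1, h2]
      simp [vEmb]
    simpa [vEmb, Prod.ext_iff] using hm
  have hdet : α₁ * β₂ - α₂ * β₁ ≠ 0 := by
    intro h
    obtain ⟨hb2, ha2⟩ := hinj β₂ (-α₂) (by linear_combination h) (by ring)
    have ha2' : α₂ = 0 := neg_eq_zero.mp ha2
    obtain ⟨hb1, ha1⟩ := hinj β₁ (-α₁) (by ring)
      (by rw [ha2', hb2]; ring)
    have ha1' : α₁ = 0 := neg_eq_zero.mp ha1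
    obtain ⟨h10, -⟩ := hinj 1 0 (by rw [ha1']; ring) (by rw [ha2']; ring)
    exact one_ne_zero h10
  -- the linear maps
  set ψl : V →ₗ[K] W :=
    (LinearMap.snd K (K × K) W) ∘ₗ (φ : ((K × K) × V) →ₗ[K] (K × K) × W) ∘ₗ
      (LinearMap.inr K (K × K) V) with hψl
  set ψi : W →ₗ[K] V :=
    (LinearMap.snd K (K × K) V) ∘ₗ (φ.symm : ((K × K) × W) →ₗ[K] (K × K) × V) ∘ₗ
      (LinearMap.inr K (K × K) W) with hψi
  have hψlv : ∀ v : V, ψl v = (φ ((0 : K × K), v)).2 := fun v => rfl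
  have hψiw : ∀ w : W, ψi w = (φ.symm ((0 : K × K), w)).2 := fun w => rfl
  have hli : ∀ w : W, ψl (ψi w) = w := by
    intro w
    have : φ ((0 : K × K), ψi w) = ((0 : K × K), w) := by
      rw [hψiw, ← hAs, φ.apply_symm_apply]
    rw [hψlv, this]
  have hil : ∀ v : V, ψi (ψl v) = v := by
    intro v
    have : φ.symm ((0 : K × K), ψl v) = ((0 : K × K), v) := by
      rw [hψlv, ← hA, φ.symm_apply_apply]
    rw [hψiw, this]
  refine ⟨hdet, LinearEquiv.ofLinear ψl ψi (by ext w; exact hli w) (by ext v; exact hil v),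
    ?_, ?_, ?_⟩
  · intro v
    simpa [LinearEquiv.ofLinear_apply, hψlv] using hA v
  · intro v
    have hb := hφ ((((1 : K), (0 : K)) : K × K), (0 : V)) ((0 : K × K), v)
    rw [hP, hA v] at hb
    simp only [lieBk] at hb
    have hb' : φ ((0 : K × K), P v) =
        ((0 : K × K), (α₁ • S + α₂ • T) ((φ ((0 : K × K), v)).2)) := by
      simpa using hb
    simp only [LinearEquiv.ofLinear_apply, hψlv, hb']
  · intro v
    have hb := hφ ((((0 : K), (1 : K)) : K × K), (0 : V)) ((0 : K × K), v)
    rw [hQ, hA v] at hb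
    simp only [lieBk] at hb
    have hb' : φ ((0 : K × K), Q v) =
        ((0 : K × K), (β₁ • S + β₂ • T) ((φ ((0 : K × K), v)).2)) := by
      simpa using hb
    simp only [LinearEquiv.ofLinear_apply, hψlv, hb']
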